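/- arXiv:2412.19796 — 4 statements merged into one kernel-verified Lean document; each statement's English description precedes it below -/
import Mathlib

section
/- Let N, J, K be positive integers with K ≤ min(N, J). Suppose Π, Π̃ ∈ R^{N×K} each have nonnegative entries with every row summing to 1, and each has, for every k ∈ {1,…,K}, at least one row equal to the k-th standard basis vector of R^K (a pure subject for every profile); suppose Θ, Θ̃ ∈ R^{J×K} each have rank K. If Π·Θᵀ = Π̃·Θ̃ᵀ, then there exists a K×K permutation matrix P such that Π̃ = Π·P and Θ̃ = Θ·P. -/
open scoped BigOperators
open Matrix

/-!
At a pure subject of `Π` for profile `k` the mean matrix shows the `k`-th column of `Θ`. Hence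
`Θᵀ = B Θ̃ᵀ` and `Θ̃ᵀ = A Θᵀ`, where `B` and `A` collect the rows of `Π̃` and `Π` at the pure
subjects of the other model, and since `Θᵀ` has full row rank, `B A = 1`. For nonnegative
matrices this forces every row of `A` to be supported on a single column, so `A`, whose rows
sum to one, is a permutation matrix. Cancelling `Θᵀ` in `Π Θᵀ = Π̃ A Θᵀ` gives `Π = Π̃ A`.
-/

namespace Matrix

variable {l m n p R : Type*}

theorem linearIndependent_row_of_rank_eq_card [Field R] [Fintype m] [Fintype n]
    {A : Matrix m n R} (hA : A.rank = Fintype.card m) : LinearIndependent R A.row := by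
  rw [linearIndependent_iff_card_eq_finrank_span, Set.finrank, ← rank_eq_finrank_span_row, hA]

theorem mul_right_cancel_of_rank_eq_card [Field R] [Fintype m] [Fintype n] {A : Matrix m n R}
    (hA : A.rank = Fintype.card m) {M M' : Matrix l m R} (h : M * A = M' * A) : M = M' := by
  cases isEmpty_or_nonempty l
  · exact Subsingleton.elim _ _
  exact mul_left_injective_iff_vecMul_injective.2
    (vecMul_injective_iff.2 (linearIndependent_row_of_rank_eq_card hA)) h

theorem eq_submatrix_mul_of_mul_eq_mul [NonAssocSemiring R] [Fintype n] [DecidableEq n]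
    [Fintype p] {P : Matrix m n R} {P' : Matrix m p R} {X : Matrix n l R} {X' : Matrix p l R}
    {e : n → m} (hP : ∀ k k', P (e k) k' = if k' = k then 1 else 0) (h : P * X = P' * X') :
    X = P'.submatrix e id * X' := by
  ext k j
  simpa [mul_apply, hP] using congrFun₂ h (e k) j

section Stochastic

variable [Semiring R] [PartialOrder R] [IsOrderedRing R] [NoZeroDivisors R] [Fintype n]
  [DecidableEq n] {A B : Matrix n n R}

theorem row_eq_single_of_mul_eq_one (hA : ∀ i j, 0 ≤ A i j) (hA1 : ∀ i, ∑ j, A i j = 1)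
    (hB : ∀ i j, 0 ≤ B i j) (h : B * A = 1) {k l : n} (hkl : B k l ≠ 0) :
    A l = Pi.single k 1 := by
  have hzero : ∀ m ≠ k, A l m = 0 := by
    intro m hm
    have hsum : ∑ l', B k l' * A l' m = 0 := by
      rw [← mul_apply, h, one_apply_ne hm.symm]
    have := (Finset.sum_eq_zero_iff_of_nonneg fun l' _ => mul_nonneg (hB k l') (hA l' m)).1
      hsum l (Finset.mem_univ _)
    exact (mul_eq_zero.1 this).resolve_left hkl
  have hk : A l k = 1 := by
    rw [← hA1 l, Finset.sum_eq_single k (fun m _ => hzero m) (by simp)]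
  ext m
  rcases eq_or_ne m k with rfl | hm
  · simp [hk]
  · simp [hzero m hm, hm]

theorem exists_eq_permMatrix_of_mul_eq_one [Nontrivial R] (hA : ∀ i j, 0 ≤ A i j)
    (hA1 : ∀ i, ∑ j, A i j = 1) (hB : ∀ i j, 0 ≤ B i j) (h : B * A = 1) :
    ∃ σ : Equiv.Perm n, A = σ.permMatrix R := by
  have hex : ∀ k, ∃ l, B k l ≠ 0 := by
    intro k
    by_contra! h0
    simpa [mul_apply, h0] using congrFun₂ h k k
  choose f hf using hex
  have hrow k := row_eq_single_of_mul_eq_one hA hA1 hB h (hf k)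
  have hinj : Function.Injective f := by
    intro k₁ k₂ h12
    by_contra hne
    have := congrFun (hrow k₂) k₁
    simp [← h12, hrow k₁, hne] at this
  let σ := Equiv.ofBijective f hinj.bijective_of_finite
  refine ⟨σ.symm, ?_⟩
  ext i j
  obtain ⟨k, rfl⟩ := σ.surjective i
  rw [show A (σ k) = Pi.single k 1 from hrow k]
  simp [PEquiv.toMatrix_apply, Pi.single_apply, eq_comm]

end Stochastic

end Matrix

theorem stmt0_general (N J K : ℕ)
    (Pm Pm' : Matrix (Fin N) (Fin K) ℝ) (Tm Tm' : Matrix (Fin J) (Fin K) ℝ)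
    (hPmpos : ∀ i k, 0 ≤ Pm i k) (hPmsum : ∀ i, ∑ k, Pm i k = 1)
    (hPm'pos : ∀ i k, 0 ≤ Pm' i k)
    (hpure : ∀ k : Fin K, ∃ i : Fin N, ∀ k' : Fin K, Pm i k' = if k' = k then 1 else 0)
    (hpure' : ∀ k : Fin K, ∃ i : Fin N, ∀ k' : Fin K, Pm' i k' = if k' = k then 1 else 0)
    (hTm : Tm.rank = K)
    (heq : Pm * Tmᵀ = Pm' * Tm'ᵀ) :
    ∃ σp : Equiv.Perm (Fin K),
      Pm' = Pm * σp.permMatrix ℝ ∧ Tm' = Tm * σp.permMatrix ℝ := by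
  choose ip hip using hpure
  choose ip' hip' using hpure'
  have hTm_eq : Tmᵀ = Pm'.submatrix ip id * Tm'ᵀ := eq_submatrix_mul_of_mul_eq_mul hip heq
  have hTm'_eq : Tm'ᵀ = Pm.submatrix ip' id * Tmᵀ := eq_submatrix_mul_of_mul_eq_mul hip' heq.symm
  have hrank : Tmᵀ.rank = Fintype.card (Fin K) := by rw [rank_transpose, hTm, Fintype.card_fin]
  have hmul_eq_one : Pm'.submatrix ip id * Pm.submatrix ip' id = 1 :=
    mul_right_cancel_of_rank_eq_card hrank
      (by rw [Matrix.mul_assoc, ← hTm'_eq, ← hTm_eq, Matrix.one_mul])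
  obtain ⟨σ, hσ⟩ := exists_eq_permMatrix_of_mul_eq_one (A := Pm.submatrix ip' id)
    (fun _ _ => hPmpos _ _) (fun _ => hPmsum _) (fun _ _ => hPm'pos _ _) hmul_eq_one
  have hPA : Pm = Pm' * σ.permMatrix ℝ :=
    mul_right_cancel_of_rank_eq_card hrank (by rw [heq, hTm'_eq, hσ, Matrix.mul_assoc])
  refine ⟨σ⁻¹, ?_, ?_⟩
  · rw [hPA, Matrix.mul_assoc, ← permMatrix_mul, inv_mul_cancel, permMatrix_one, Matrix.mul_one]
  · rw [← transpose_permMatrix, ← transpose_transpose Tm', hTm'_eq, hσ, transpose_mul,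
      transpose_transpose]

/-- expectation identifiability of the generalized GoM model.
If two pairs `(Pm, Tm)` and `(Pm', Tm')` of membership-score / item-parameter matrices,
each satisfying the pure-subject condition and full column rank of the item-parameter
matrix, give rise to the same mean matrix `Π·Θᵀ`, then they coincide up to a common
permutation of the `K` columns. -/
theorem stmt0 (N J K : ℕ) (hK : 0 < K) (hKN : K ≤ N) (hKJ : K ≤ J)
    (Pm Pm' : Matrix (Fin N) (Fin K) ℝ) (Tm Tm' : Matrix (Fin J) (Fin K) ℝ)
    (hPmpos : ∀ i k, 0 ≤ Pm i k) (hPmsum : ∀ i, ∑ k, Pm i k = 1)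
    (hPm'pos : ∀ i k, 0 ≤ Pm' i k) (hPm'sum : ∀ i, ∑ k, Pm' i k = 1)
    (hpure : ∀ k : Fin K, ∃ i : Fin N, ∀ k' : Fin K, Pm i k' = if k' = k then 1 else 0)
    (hpure' : ∀ k : Fin K, ∃ i : Fin N, ∀ k' : Fin K, Pm' i k' = if k' = k then 1 else 0)
    (hTm : Tm.rank = K) (hTm' : Tm'.rank = K)
    (heq : Pm * Tmᵀ = Pm' * Tm'ᵀ) :
    ∃ σp : Equiv.Perm (Fin K),
      Pm' = Pm * σp.permMatrix ℝ ∧ Tm' = Tm * σp.permMatrix ℝ :=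
  stmt0_general N J K Pm Pm' Tm Tm' hPmpos hPmsum hPm'pos hpure hpure' hTm heq
end

section
/- Let Π* ∈ R^{N×K} have nonnegative entries with every row summing to 1, and suppose there are row indices S = (S₁, …, S_K) with Π*_{S,:} = I_K (a pure subject for every profile). Let Θ* ∈ R^{J×K} have rank K, set R* := Π*·(Θ*)ᵀ, and let R* = U*·Λ*·(V*)ᵀ be a compact singular value decomposition, i.e., U* ∈ R^{N×K} and V* ∈ R^{J×K} have orthonormal columns and Λ* ∈ R^{K×K} is diagonal with strictly positive diagonal entries. Then the K×K matrix U*_{S,:} is invertible, and moreover U* = Π*·U*_{S,:}, Π* = U*·(U*_{S,:})⁻¹, and Θ* = V*·Λ*·(U*_{S,:})ᵀ. -/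
/-!
Since `V*` has orthonormal columns and `Λ*` is invertible, `U* = R* V* Λ*⁻¹ = Π* (Θ*ᵀ V* Λ*⁻¹)`.
Reading off the pure rows `S`, where `Π*` is the identity, identifies the right factor as
`U*_{S,:}`, so `U* = Π* U*_{S,:}`. Orthonormality of the columns of `U*` then gives
`U*_{S,:}` a left inverse, hence it is invertible, and the pure rows of `R* = U* Λ* V*ᵀ`
read `Θ*ᵀ = U*_{S,:} Λ* V*ᵀ`.
-/

open Matrix

namespace Matrix

variable {l m n o p α : Type*}

theorem submatrix_mul_id [Fintype n] [NonUnitalNonAssocSemiring α]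
    (M : Matrix m n α) (N : Matrix n o α) (e : l → m) :
    (M * N).submatrix e id = M.submatrix e id * N := by
  simpa using submatrix_mul M N e id id Function.bijective_id

theorem submatrix_mul_of_submatrix_eq_one [Fintype n] [DecidableEq n] [NonAssocSemiring α]
    {P : Matrix m n α} {S : n → m} (hS : P.submatrix S id = 1) (M : Matrix n o α) :
    (P * M).submatrix S id = M := by
  rw [submatrix_mul_id, hS, Matrix.one_mul]

theorem eq_mul_of_mul_eq_mul_diagonal_mul_transpose [Fintype n] [Fintype o] [Fintype p]
    [DecidableEq o] [Field α] {P : Matrix m n α} {M : Matrix n p α} {U : Matrix m o α}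
    {σ : o → α} {V : Matrix p o α} (hV : Vᵀ * V = 1) (hσ : ∀ k, σ k ≠ 0)
    (h : P * M = U * diagonal σ * Vᵀ) :
    U = P * (M * V * diagonal σ⁻¹) := by
  have hσσ : diagonal σ * diagonal σ⁻¹ = 1 := by
    rw [diagonal_mul_diagonal, ← diagonal_one]
    exact congrArg diagonal (funext fun k => mul_inv_cancel₀ (hσ k))
  calc U = U * diagonal σ * (Vᵀ * V) * diagonal σ⁻¹ := by
        rw [hV, Matrix.mul_one, Matrix.mul_assoc, hσσ, Matrix.mul_one]
    _ = P * (M * V * diagonal σ⁻¹) := by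
        rw [← Matrix.mul_assoc, ← h]
        simp only [Matrix.mul_assoc]

theorem eq_mul_submatrix_of_mul_eq_mul_diagonal_mul_transpose [Fintype n] [Fintype p]
    [DecidableEq n] [Field α] {P : Matrix m n α} {M : Matrix n p α} {U : Matrix m n α}
    {σ : n → α} {V : Matrix p n α} {S : n → m} (hS : P.submatrix S id = 1)
    (hV : Vᵀ * V = 1) (hσ : ∀ k, σ k ≠ 0) (h : P * M = U * diagonal σ * Vᵀ) :
    U = P * U.submatrix S id := by
  rw [eq_mul_of_mul_eq_mul_diagonal_mul_transpose hV hσ h,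
    submatrix_mul_of_submatrix_eq_one hS]

theorem isUnit_of_eq_mul_of_transpose_mul_self_eq_one [Fintype m] [Fintype n] [DecidableEq n]
    [CommRing α] {U P : Matrix m n α} {B : Matrix n n α} (hU : U = P * B)
    (hUorth : Uᵀ * U = 1) : IsUnit B := by
  subst hU
  refine (isUnit_iff_isUnit_det B).mpr (isUnit_det_of_left_inverse (B := (P * B)ᵀ * P) ?_)
  rw [Matrix.mul_assoc, hUorth]

end Matrix

theorem stmt1_general (N J K : ℕ)
    (Pm : Matrix (Fin N) (Fin K) ℝ) (Tm : Matrix (Fin J) (Fin K) ℝ)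
    (S : Fin K → Fin N) (hS : Pm.submatrix S id = 1)
    (Ustar : Matrix (Fin N) (Fin K) ℝ) (Vstar : Matrix (Fin J) (Fin K) ℝ)
    (σs : Fin K → ℝ)
    (hUorth : Ustarᵀ * Ustar = 1) (hVorth : Vstarᵀ * Vstar = 1)
    (hσpos : ∀ k, 0 < σs k)
    (hSVD : Pm * Tmᵀ = Ustar * Matrix.diagonal σs * Vstarᵀ) :
    IsUnit (Ustar.submatrix S id) ∧
    Ustar = Pm * Ustar.submatrix S id ∧
    Pm = Ustar * (Ustar.submatrix S id)⁻¹ ∧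
    Tm = Vstar * Matrix.diagonal σs * (Ustar.submatrix S id)ᵀ := by
  have hU : Ustar = Pm * Ustar.submatrix S id :=
    eq_mul_submatrix_of_mul_eq_mul_diagonal_mul_transpose hS hVorth (fun k => (hσpos k).ne') hSVD
  have hUS : IsUnit (Ustar.submatrix S id) :=
    isUnit_of_eq_mul_of_transpose_mul_self_eq_one hU hUorth
  have hTm : Tmᵀ = Ustar.submatrix S id * diagonal σs * Vstarᵀ := by
    rw [← submatrix_mul_of_submatrix_eq_one hS Tmᵀ, hSVD, submatrix_mul_id, submatrix_mul_id]
  refine ⟨hUS, hU, ?_, ?_⟩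
  · calc Pm = Pm * Ustar.submatrix S id * (Ustar.submatrix S id)⁻¹ :=
          (mul_nonsing_inv_cancel_right _ _ ((isUnit_iff_isUnit_det _).mp hUS)).symm
      _ = Ustar * (Ustar.submatrix S id)⁻¹ := by rw [← hU]
  · rw [← transpose_transpose Tm, hTm]
    simp only [transpose_mul, transpose_transpose, diagonal_transpose, Matrix.mul_assoc]

/-- Lemma: simplex geometry of the left singular vectors.
With a pure subject for every profile (rows `S` of `Π*` forming `I_K`) and a rank-`K`
item-parameter matrix, the compact SVD `R* = U*·Λ*·(V*)ᵀ` of `R* = Π*·(Θ*)ᵀ` satisfies: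
`U*_{S,:}` is invertible, `U* = Π*·U*_{S,:}`, `Π* = U*·(U*_{S,:})⁻¹`, and
`Θ* = V*·Λ*·(U*_{S,:})ᵀ`. -/
theorem stmt1 (N J K : ℕ) (hK : 0 < K) (hKN : K ≤ N) (hKJ : K ≤ J)
    (Pm : Matrix (Fin N) (Fin K) ℝ) (Tm : Matrix (Fin J) (Fin K) ℝ)
    (hPmpos : ∀ i k, 0 ≤ Pm i k) (hPmsum : ∀ i, ∑ k, Pm i k = 1)
    (S : Fin K → Fin N) (hS : Pm.submatrix S id = 1)
    (hTm : Tm.rank = K)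
    (Ustar : Matrix (Fin N) (Fin K) ℝ) (Vstar : Matrix (Fin J) (Fin K) ℝ)
    (σs : Fin K → ℝ)
    (hUorth : Ustarᵀ * Ustar = 1) (hVorth : Vstarᵀ * Vstar = 1)
    (hσpos : ∀ k, 0 < σs k)
    (hSVD : Pm * Tmᵀ = Ustar * Matrix.diagonal σs * Vstarᵀ) :
    IsUnit (Ustar.submatrix S id) ∧
    Ustar = Pm * Ustar.submatrix S id ∧
    Pm = Ustar * (Ustar.submatrix S id)⁻¹ ∧
    Tm = Vstar * Matrix.diagonal σs * (Ustar.submatrix S id)ᵀ :=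
  stmt1_general N J K Pm Tm S hS Ustar Vstar σs hUorth hVorth hσpos hSVD
end

section
/- Let Π* ∈ R^{N×K} have nonnegative entries with every row summing to 1 and row indices S = (S₁, …, S_K) with Π*_{S,:} = I_K; let Θ* ∈ R^{J×K} have rank K, R* := Π*·(Θ*)ᵀ, and let R* = U*·Λ*·(V*)ᵀ be a compact SVD with U* ∈ R^{N×K}, V* ∈ R^{J×K} having orthonormal columns and Λ* diagonal with positive diagonal entries. Then (U*_{S,:})ᵀ·(Π*)ᵀ·Π*·U*_{S,:} = I_K; consequently σ₁(U*_{S,:}) = 1/σ_K(Π*), σ_K(U*_{S,:}) = 1/σ₁(Π*), and κ(U*_{S,:}) = κ(Π*). -/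
open scoped BigOperators
open Matrix

/-- Euclidean (ℓ2) norm of a finite real vector. -/
noncomputable def vecNorm2 {n : ℕ} (v : Fin n → ℝ) : ℝ :=
  Real.sqrt (∑ j, (v j) ^ 2)

/-- `singVal A k` is the `k`-th largest singular value of `A` (1-indexed),
via the Courant–Fischer max-min characterization. -/
noncomputable def singVal {m n : ℕ} (A : Matrix (Fin m) (Fin n) ℝ) (k : ℕ) : ℝ :=
  sSup {r : ℝ | ∃ W : Submodule ℝ (Fin n → ℝ), Module.finrank ℝ W = k ∧
      ∀ x ∈ W, r * vecNorm2 x ≤ vecNorm2 (A.mulVec x)}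

lemma vecNorm2_nonneg {n : ℕ} (v : Fin n → ℝ) : 0 ≤ vecNorm2 v := Real.sqrt_nonneg _

lemma vecNorm2_zero {n : ℕ} : vecNorm2 (0 : Fin n → ℝ) = 0 := by simp [vecNorm2]

lemma vecNorm2_pos {n : ℕ} {v : Fin n → ℝ} (hv : v ≠ 0) : 0 < vecNorm2 v := by
  obtain ⟨j, hj⟩ := Function.ne_iff.1 hv
  refine Real.sqrt_pos.2 (Finset.sum_pos' (fun i _ => sq_nonneg _) ⟨j, Finset.mem_univ j, ?_⟩)
  exact pow_pos (abs_pos.2 hj) 2 |>.trans_eq (by rw [sq_abs])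

lemma vecNorm2_smul {n : ℕ} (c : ℝ) (v : Fin n → ℝ) :
    vecNorm2 (c • v) = |c| * vecNorm2 v := by
  unfold vecNorm2
  have h : ∑ j, (c • v) j ^ 2 = c ^ 2 * ∑ j, v j ^ 2 := by
    rw [Finset.mul_sum]
    exact Finset.sum_congr rfl fun j _ => by simp [mul_pow]
  rw [h, Real.sqrt_mul (sq_nonneg c), Real.sqrt_sq_eq_abs]

lemma vecNorm2_continuous {n : ℕ} : Continuous (vecNorm2 (n := n)) := by
  unfold vecNorm2
  exact Real.continuous_sqrt.comp (by fun_prop)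

set_option maxHeartbeats 1000000 in
/-- Under the pure-subject condition, the `K×K` submatrix `U*_{S,:}`
satisfies `(U*_{S,:})ᵀ·(Π*)ᵀ·Π*·U*_{S,:} = I_K`; consequently
`σ₁(U*_{S,:}) = 1/σ_K(Π*)`, `σ_K(U*_{S,:}) = 1/σ₁(Π*)` and `κ(U*_{S,:}) = κ(Π*)`. -/
theorem stmt2 (N J K : ℕ) (hK : 0 < K) (hKN : K ≤ N) (hKJ : K ≤ J)
    (Pm : Matrix (Fin N) (Fin K) ℝ) (Tm : Matrix (Fin J) (Fin K) ℝ)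
    (hPmpos : ∀ i k, 0 ≤ Pm i k) (hPmsum : ∀ i, ∑ k, Pm i k = 1)
    (S : Fin K → Fin N) (hS : Pm.submatrix S id = 1)
    (hTm : Tm.rank = K)
    (Ustar : Matrix (Fin N) (Fin K) ℝ) (Vstar : Matrix (Fin J) (Fin K) ℝ)
    (σs : Fin K → ℝ)
    (hUorth : Ustarᵀ * Ustar = 1) (hVorth : Vstarᵀ * Vstar = 1)
    (hσpos : ∀ k, 0 < σs k)
    (hSVD : Pm * Tmᵀ = Ustar * Matrix.diagonal σs * Vstarᵀ) :
    (Ustar.submatrix S id)ᵀ * Pmᵀ * Pm * Ustar.submatrix S id = 1 ∧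
    singVal (Ustar.submatrix S id) 1 = (singVal Pm K)⁻¹ ∧
    singVal (Ustar.submatrix S id) K = (singVal Pm 1)⁻¹ ∧
    singVal (Ustar.submatrix S id) 1 / singVal (Ustar.submatrix S id) K
      = singVal Pm 1 / singVal Pm K := by
  classical
  set US := Ustar.submatrix S id with hUSdef
  -- Step 1: Ustar = Pm * US
  have hUdiag : Pm * Tmᵀ * Vstar = Ustar * Matrix.diagonal σs := by
    rw [hSVD, Matrix.mul_assoc (Ustar * Matrix.diagonal σs) Vstarᵀ Vstar, hVorth,
      Matrix.mul_one]
  have hσinv : Matrix.diagonal σs * Matrix.diagonal (fun k => (σs k)⁻¹) = 1 := by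
    rw [Matrix.diagonal_mul_diagonal]
    have : (fun i => σs i * (σs i)⁻¹) = fun _ => (1 : ℝ) := by
      funext i; exact mul_inv_cancel₀ (hσpos i).ne'
    rw [this, Matrix.diagonal_one]
  have hUfac : Ustar = Pm * (Tmᵀ * Vstar * Matrix.diagonal fun k => (σs k)⁻¹) := by
    calc Ustar = Ustar * (Matrix.diagonal σs * Matrix.diagonal fun k => (σs k)⁻¹) := by
          rw [hσinv, Matrix.mul_one]
      _ = (Pm * Tmᵀ * Vstar) * Matrix.diagonal fun k => (σs k)⁻¹ := by
          rw [← Matrix.mul_assoc, hUdiag]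
      _ = Pm * (Tmᵀ * Vstar * Matrix.diagonal fun k => (σs k)⁻¹) := by
          simp only [Matrix.mul_assoc]
  have hUSM : US = Tmᵀ * Vstar * Matrix.diagonal fun k => (σs k)⁻¹ := by
    rw [hUSdef, hUfac, Matrix.submatrix_mul _ _ S id id Function.bijective_id, hS,
      Matrix.submatrix_id_id, Matrix.one_mul]
  have hUS : Ustar = Pm * US := by rw [hUSM]; exact hUfac
  -- Part 1
  have part1 : USᵀ * Pmᵀ * Pm * US = 1 := by
    have h : USᵀ * Pmᵀ * Pm * US = (Pm * US)ᵀ * (Pm * US) := by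
      rw [Matrix.transpose_mul, Matrix.mul_assoc]
    rw [h, ← hUS, hUorth]
  -- US is invertible
  have hdet : IsUnit US.det := by
    have h1 : USᵀ * (Pmᵀ * Pm) * US = 1 := by
      rw [← Matrix.mul_assoc USᵀ Pmᵀ Pm]; exact part1
    have hd := congrArg Matrix.det h1
    rw [Matrix.det_mul, Matrix.det_mul, Matrix.det_transpose, Matrix.det_one] at hd
    exact isUnit_iff_ne_zero.2 fun h => by simp [h] at hd
  have hUSinv : US * US⁻¹ = 1 := Matrix.mul_nonsing_inv US hdet
  have hUSinv' : US⁻¹ * US = 1 := Matrix.nonsing_inv_mul US hdet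
  -- key norm identity
  have hnorm : ∀ z : Fin K → ℝ, vecNorm2 (Pm *ᵥ (US *ᵥ z)) = vecNorm2 z := by
    intro z
    have h1 : Pm *ᵥ (US *ᵥ z) = Ustar *ᵥ z := by rw [Matrix.mulVec_mulVec, ← hUS]
    rw [h1]
    unfold vecNorm2
    congr 1
    have h3 : (Ustar *ᵥ z) ᵥ* Ustar = z := by
      rw [← Matrix.mulVec_transpose, Matrix.mulVec_mulVec, hUorth, Matrix.one_mulVec]
    calc ∑ i, (Ustar *ᵥ z) i ^ 2 = (Ustar *ᵥ z) ⬝ᵥ (Ustar *ᵥ z) := by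
          simp [dotProduct, sq]
      _ = ((Ustar *ᵥ z) ᵥ* Ustar) ⬝ᵥ z := Matrix.dotProduct_mulVec _ _ _
      _ = z ⬝ᵥ z := by rw [h3]
      _ = ∑ j, z j ^ 2 := by simp [dotProduct, sq]
  have hsolve : ∀ y : Fin K → ℝ, ∃ z, US *ᵥ z = y := fun y =>
    ⟨US⁻¹ *ᵥ y, by rw [Matrix.mulVec_mulVec, hUSinv, Matrix.one_mulVec]⟩
  have hUSinj : ∀ z : Fin K → ℝ, z ≠ 0 → US *ᵥ z ≠ 0 := by
    intro z hz h
    apply hz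
    have := congrArg (fun w => US⁻¹ *ᵥ w) h
    simpa [Matrix.mulVec_mulVec, hUSinv', Matrix.one_mulVec] using this
  -- compactness setup
  have hSphC : IsCompact {x : Fin K → ℝ | vecNorm2 x = 1} := by
    have hclosed : IsClosed {x : Fin K → ℝ | vecNorm2 x = 1} :=
      isClosed_singleton.preimage vecNorm2_continuous
    refine (isCompact_closedBall (0 : Fin K → ℝ) 1).of_isClosed_subset hclosed ?_
    intro x hx
    rw [Metric.mem_closedBall, dist_zero_right, pi_norm_le_iff_of_nonneg zero_le_one]
    intro j
    rw [Real.norm_eq_abs, ← Real.sqrt_sq_eq_abs]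
    calc Real.sqrt (x j ^ 2) ≤ Real.sqrt (∑ i, x i ^ 2) :=
          Real.sqrt_le_sqrt
            (Finset.single_le_sum (fun i _ => sq_nonneg (x i)) (Finset.mem_univ j))
      _ = 1 := hx
  have hSphNe : Set.Nonempty {x : Fin K → ℝ | vecNorm2 x = 1} := by
    refine ⟨fun j => if j = ⟨0, hK⟩ then (1 : ℝ) else 0, ?_⟩
    have h : ∀ j : Fin K, (if j = (⟨0, hK⟩ : Fin K) then (1 : ℝ) else 0) ^ 2
        = if j = ⟨0, hK⟩ then 1 else 0 := by
      intro j; rcases eq_or_ne j ⟨0, hK⟩ with h | h <;> simp [h]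
    show vecNorm2 _ = 1
    unfold vecNorm2
    simp [h]
  have hgc : Continuous fun x : Fin K → ℝ => vecNorm2 (Pm *ᵥ x) :=
    vecNorm2_continuous.comp
      (Pm.mulVecLin.continuous_of_finiteDimensional.congr
        fun x => Matrix.mulVecLin_apply _ _)
  obtain ⟨y₀, hy₀S, hy₀min⟩ := hSphC.exists_isMinOn hSphNe hgc.continuousOn
  obtain ⟨y₁, hy₁S, hy₁max⟩ := hSphC.exists_isMaxOn hSphNe hgc.continuousOn
  have hy₀1 : vecNorm2 y₀ = 1 := hy₀S
  have hy₁1 : vecNorm2 y₁ = 1 := hy₁S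
  set m := vecNorm2 (Pm *ᵥ y₀) with hm_def
  set Mx := vecNorm2 (Pm *ᵥ y₁) with hMx_def
  -- m > 0
  have hm_pos : 0 < m := by
    obtain ⟨z, hz⟩ := hsolve y₀
    have h1 : m = vecNorm2 z := by rw [hm_def, ← hz, hnorm]
    rw [h1]
    apply vecNorm2_pos
    intro h
    rw [h, Matrix.mulVec_zero] at hz
    rw [← hz, vecNorm2_zero] at hy₀1
    exact one_ne_zero hy₀1.symm
  have hmM : m ≤ Mx := isMinOn_iff.mp hy₀min y₁ hy₁S
  have hMx_pos : 0 < Mx := hm_pos.trans_le hmM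
  -- global bounds for Pm
  have hlow : ∀ x : Fin K → ℝ, m * vecNorm2 x ≤ vecNorm2 (Pm *ᵥ x) := by
    intro x
    rcases eq_or_ne x 0 with rfl | hx
    · simp [vecNorm2_zero, Matrix.mulVec_zero]
    · have hc := vecNorm2_pos hx
      have h1 : vecNorm2 ((vecNorm2 x)⁻¹ • x) = 1 := by
        rw [vecNorm2_smul, abs_of_pos (inv_pos.2 hc), inv_mul_cancel₀ hc.ne']
      have h2 := isMinOn_iff.mp hy₀min _ h1
      rw [Matrix.mulVec_smul, vecNorm2_smul, abs_of_pos (inv_pos.2 hc)] at h2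
      have h3 := mul_le_mul_of_nonneg_right h2 hc.le
      have h4 : (vecNorm2 x)⁻¹ * vecNorm2 (Pm *ᵥ x) * vecNorm2 x = vecNorm2 (Pm *ᵥ x) := by
        field_simp
      rw [h4] at h3
      exact h3
  have hupp : ∀ x : Fin K → ℝ, vecNorm2 (Pm *ᵥ x) ≤ Mx * vecNorm2 x := by
    intro x
    rcases eq_or_ne x 0 with rfl | hx
    · simp [vecNorm2_zero, Matrix.mulVec_zero]
    · have hc := vecNorm2_pos hx
      have h1 : vecNorm2 ((vecNorm2 x)⁻¹ • x) = 1 := by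
        rw [vecNorm2_smul, abs_of_pos (inv_pos.2 hc), inv_mul_cancel₀ hc.ne']
      have h2 := isMaxOn_iff.mp hy₁max _ h1
      rw [Matrix.mulVec_smul, vecNorm2_smul, abs_of_pos (inv_pos.2 hc)] at h2
      have h3 := mul_le_mul_of_nonneg_right h2 hc.le
      have h4 : (vecNorm2 x)⁻¹ * vecNorm2 (Pm *ᵥ x) * vecNorm2 x = vecNorm2 (Pm *ᵥ x) := by
        field_simp
      rw [h4] at h3
      exact h3
  -- special vectors
  obtain ⟨z₀, hz₀⟩ := hsolve y₀
  obtain ⟨z₁, hz₁⟩ := hsolve y₁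
  have hz₀n : vecNorm2 z₀ = m := by rw [hm_def, ← hz₀, hnorm]
  have hz₁n : vecNorm2 z₁ = Mx := by rw [hMx_def, ← hz₁, hnorm]
  have hz₀ne : z₀ ≠ 0 := by
    intro h; rw [h, vecNorm2_zero] at hz₀n; exact hm_pos.ne hz₀n
  have hz₁ne : z₁ ≠ 0 := by
    intro h; rw [h, vecNorm2_zero] at hz₁n; exact hMx_pos.ne hz₁n
  have hrankK : Module.finrank ℝ (Fin K → ℝ) = K := by simp
  -- (i) singVal Pm K = m
  have e1 : singVal Pm K = m := by
    unfold singVal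
    have hset : {r : ℝ | ∃ W : Submodule ℝ (Fin K → ℝ), Module.finrank ℝ W = K ∧
        ∀ x ∈ W, r * vecNorm2 x ≤ vecNorm2 (Pm.mulVec x)} = Set.Iic m := by
      ext r
      simp only [Set.mem_setOf_eq, Set.mem_Iic]
      constructor
      · rintro ⟨W, hWrank, hW⟩
        have hWtop : W = ⊤ := Submodule.eq_top_of_finrank_eq (by rw [hWrank, hrankK])
        have h := hW y₀ (hWtop ▸ Submodule.mem_top)
        rw [hy₀1, mul_one] at h
        exact h
      · intro hr
        refine ⟨⊤, by rw [finrank_top, hrankK], fun x _ => ?_⟩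
        exact le_trans (mul_le_mul_of_nonneg_right hr (vecNorm2_nonneg x)) (hlow x)
    rw [hset, csSup_Iic]
  -- (iii) singVal Pm 1 = Mx
  have e3 : singVal Pm 1 = Mx := by
    unfold singVal
    have hset : {r : ℝ | ∃ W : Submodule ℝ (Fin K → ℝ), Module.finrank ℝ W = 1 ∧
        ∀ x ∈ W, r * vecNorm2 x ≤ vecNorm2 (Pm.mulVec x)} = Set.Iic Mx := by
      ext r
      simp only [Set.mem_setOf_eq, Set.mem_Iic]
      constructor
      · rintro ⟨W, hWrank, hW⟩
        have hWne : W ≠ ⊥ := by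
          intro h; rw [h, finrank_bot] at hWrank; exact one_ne_zero hWrank.symm
        obtain ⟨v, hvW, hv⟩ := (Submodule.ne_bot_iff W).1 hWne
        have h1 := hW v hvW
        have h2 := (h1.trans (hupp v))
        exact (mul_le_mul_iff_of_pos_right (vecNorm2_pos hv)).1 h2
      · intro hr
        refine ⟨Submodule.span ℝ {y₁}, finrank_span_singleton ?_, fun x hx => ?_⟩
        · intro h; rw [h, vecNorm2_zero] at hy₁1; exact one_ne_zero hy₁1.symm
        · obtain ⟨c, rfl⟩ := Submodule.mem_span_singleton.1 hx
          rw [Matrix.mulVec_smul, vecNorm2_smul, vecNorm2_smul, hy₁1, ← hMx_def]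
          nlinarith [abs_nonneg c]
    rw [hset, csSup_Iic]
  -- (ii) singVal US 1 = m⁻¹
  have e2 : singVal US 1 = m⁻¹ := by
    unfold singVal
    have hset : {r : ℝ | ∃ W : Submodule ℝ (Fin K → ℝ), Module.finrank ℝ W = 1 ∧
        ∀ x ∈ W, r * vecNorm2 x ≤ vecNorm2 (US.mulVec x)} = Set.Iic m⁻¹ := by
      ext r
      simp only [Set.mem_setOf_eq, Set.mem_Iic]
      constructor
      · rintro ⟨W, hWrank, hW⟩
        have hWne : W ≠ ⊥ := by
          intro h; rw [h, finrank_bot] at hWrank; exact one_ne_zero hWrank.symm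
        obtain ⟨v, hvW, hv⟩ := (Submodule.ne_bot_iff W).1 hWne
        have h1 := hW v hvW
        have h2 := hlow (US *ᵥ v)
        rw [hnorm] at h2
        -- h1 : r * ‖v‖ ≤ ‖US v‖ ; h2 : m * ‖US v‖ ≤ ‖v‖
        have hvpos := vecNorm2_pos hv
        have hUSvpos := vecNorm2_pos (hUSinj v hv)
        rw [inv_eq_one_div, le_div_iff₀ hm_pos]
        nlinarith
      · intro hr
        refine ⟨Submodule.span ℝ {z₀}, finrank_span_singleton hz₀ne, fun x hx => ?_⟩
        obtain ⟨c, rfl⟩ := Submodule.mem_span_singleton.1 hx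
        rw [Matrix.mulVec_smul, vecNorm2_smul, vecNorm2_smul, hz₀n, hz₀, hy₀1]
        have hrm : r * m ≤ 1 := by
          have := mul_le_mul_of_nonneg_right hr hm_pos.le
          rwa [inv_mul_cancel₀ hm_pos.ne'] at this
        nlinarith [abs_nonneg c]
    rw [hset, csSup_Iic]
  -- (iv) singVal US K = Mx⁻¹
  have e4 : singVal US K = Mx⁻¹ := by
    unfold singVal
    have hset : {r : ℝ | ∃ W : Submodule ℝ (Fin K → ℝ), Module.finrank ℝ W = K ∧
        ∀ x ∈ W, r * vecNorm2 x ≤ vecNorm2 (US.mulVec x)} = Set.Iic Mx⁻¹ := by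
      ext r
      simp only [Set.mem_setOf_eq, Set.mem_Iic]
      constructor
      · rintro ⟨W, hWrank, hW⟩
        have hWtop : W = ⊤ := Submodule.eq_top_of_finrank_eq (by rw [hWrank, hrankK])
        have h := hW z₁ (hWtop ▸ Submodule.mem_top)
        rw [hz₁n, hz₁, hy₁1] at h
        rw [inv_eq_one_div, le_div_iff₀ hMx_pos]
        linarith
      · intro hr
        refine ⟨⊤, by rw [finrank_top, hrankK], fun x _ => ?_⟩
        have h2 := hupp (US *ᵥ x)
        rw [hnorm] at h2
        -- h2 : ‖x‖ ≤ Mx * ‖US x‖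
        have h3 : Mx⁻¹ * vecNorm2 x ≤ vecNorm2 (US *ᵥ x) := by
          have := mul_le_mul_of_nonneg_left h2 (inv_pos.2 hMx_pos).le
          rwa [← mul_assoc, inv_mul_cancel₀ hMx_pos.ne', one_mul] at this
        exact le_trans (mul_le_mul_of_nonneg_right hr (vecNorm2_nonneg x)) h3
    rw [hset, csSup_Iic]
  refine ⟨part1, ?_, ?_, ?_⟩
  · rw [e2, e1]
  · rw [e4, e3]
  · rw [e2, e4, e1, e3, inv_div_inv]
end

section
/- Let U, U* ∈ R^{N×K} each have orthonormal columns (UᵀU = (U*)ᵀU* = I_K). Let Uᵀ·U* = U_L·Λ_L·(V_L)ᵀ be a singular value decomposition with U_L, V_L ∈ R^{K×K} orthogonal and Λ_L diagonal with nonnegative diagonal entries, and define the orthogonal Procrustes factor R_U := U_L·(V_L)ᵀ. Then ‖R_U − Uᵀ·U*‖ = ‖I_K − Λ_L‖ ≤ ‖I_K − Λ_L²‖ = ‖(I_N − U·Uᵀ)·U*‖². -/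
open scoped BigOperators
open Matrix

/-- Spectral norm (largest singular value), as the operator norm w.r.t. ℓ2 norms. -/
noncomputable def specNorm {m n : ℕ} (A : Matrix (Fin m) (Fin n) ℝ) : ℝ :=
  sSup {r : ℝ | ∃ x : Fin n → ℝ, vecNorm2 x ≤ 1 ∧ r = vecNorm2 (A.mulVec x)}

section Helpers

open scoped Matrix.Norms.L2Operator

lemma vecNorm2_eq {n : ℕ} (v : Fin n → ℝ) :
    vecNorm2 v = ‖(WithLp.equiv 2 (Fin n → ℝ)).symm v‖ := by
  rw [vecNorm2, EuclideanSpace.norm_eq]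
  congr 1
  refine Finset.sum_congr rfl fun j _ => ?_
  simp [Real.norm_eq_abs, sq_abs]

lemma specNorm_eq_norm {m n : ℕ} (A : Matrix (Fin m) (Fin n) ℝ) : specNorm A = ‖A‖ := by
  rw [Matrix.l2_opNorm_def, ← ContinuousLinearMap.sSup_unitClosedBall_eq_norm]
  unfold specNorm
  congr 1
  ext r
  simp only [Set.mem_setOf_eq, Set.mem_image, Metric.mem_closedBall, dist_zero_right]
  constructor
  · rintro ⟨x, hx, rfl⟩
    refine ⟨(WithLp.equiv 2 (Fin n → ℝ)).symm x, by rwa [← vecNorm2_eq], ?_⟩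
    rw [vecNorm2_eq]
    rfl
  · rintro ⟨y, hy, rfl⟩
    refine ⟨WithLp.equiv 2 (Fin n → ℝ) y, ?_, ?_⟩
    · rw [vecNorm2_eq]; simpa using hy
    · rw [vecNorm2_eq]; rfl

lemma conjT_eq {m n : ℕ} (A : Matrix (Fin m) (Fin n) ℝ) : Aᴴ = Aᵀ := by
  ext i j; simp [Matrix.conjTranspose_apply]

lemma norm_one_le (K : ℕ) : ‖(1 : Matrix (Fin K) (Fin K) ℝ)‖ ≤ 1 := by
  rw [Matrix.l2_opNorm_def]
  have h : (Matrix.toEuclideanLin.trans LinearMap.toContinuousLinearMap)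
      (1 : Matrix (Fin K) (Fin K) ℝ) = ContinuousLinearMap.id ℝ _ := by
    ext y
    simp [Matrix.toEuclideanLin_apply, Matrix.one_mulVec]
  rw [h]
  exact ContinuousLinearMap.norm_id_le

lemma orth_norm_le_one {K : ℕ} (Q : Matrix (Fin K) (Fin K) ℝ) (h : Qᵀ * Q = 1) : ‖Q‖ ≤ 1 := by
  have h2 : ‖Q‖ * ‖Q‖ = ‖(1 : Matrix (Fin K) (Fin K) ℝ)‖ := by
    rw [← Matrix.l2_opNorm_conjTranspose_mul_self, conjT_eq, h]
  nlinarith [norm_nonneg Q, norm_one_le K]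

lemma norm_triple_le {K : ℕ} (Q A P : Matrix (Fin K) (Fin K) ℝ)
    (hQ : ‖Q‖ ≤ 1) (hP : ‖P‖ ≤ 1) : ‖Q * A * P‖ ≤ ‖A‖ := by
  calc ‖Q * A * P‖ ≤ ‖Q * A‖ * ‖P‖ := Matrix.l2_opNorm_mul _ _
    _ ≤ ‖Q * A‖ := mul_le_of_le_one_right (norm_nonneg _) hP
    _ ≤ ‖Q‖ * ‖A‖ := Matrix.l2_opNorm_mul _ _
    _ ≤ ‖A‖ := mul_le_of_le_one_left (norm_nonneg _) hQ

lemma norm_conj {K : ℕ} (Q A P : Matrix (Fin K) (Fin K) ℝ)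
    (hQ : Qᵀ * Q = 1) (hQ' : Q * Qᵀ = 1) (hP : Pᵀ * P = 1) (hP' : P * Pᵀ = 1) :
    ‖Q * A * P‖ = ‖A‖ := by
  refine le_antisymm (norm_triple_le _ _ _ (orth_norm_le_one Q hQ) (orth_norm_le_one P hP)) ?_
  have hA : A = Qᵀ * (Q * A * P) * Pᵀ := by
    have h : Qᵀ * (Q * A * P) * Pᵀ = (Qᵀ * Q) * A * (P * Pᵀ) := by
      simp only [Matrix.mul_assoc]
    rw [h, hQ, hP', Matrix.one_mul, Matrix.mul_one]
  calc ‖A‖ = ‖Qᵀ * (Q * A * P) * Pᵀ‖ := by rw [← hA]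
    _ ≤ ‖Q * A * P‖ := norm_triple_le _ _ _
        (orth_norm_le_one Qᵀ (by rwa [Matrix.transpose_transpose]))
        (orth_norm_le_one Pᵀ (by rwa [Matrix.transpose_transpose]))

lemma norm_diagonal_le_one {K : ℕ} (w : Fin K → ℝ) (hw : ∀ k, |w k| ≤ 1) :
    ‖(Matrix.diagonal w : Matrix (Fin K) (Fin K) ℝ)‖ ≤ 1 := by
  rw [Matrix.l2_opNorm_def]
  refine ContinuousLinearMap.opNorm_le_bound _ zero_le_one fun y => ?_
  rw [one_mul]
  have hy : (Matrix.toEuclideanLin.trans LinearMap.toContinuousLinearMap)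
      (Matrix.diagonal w) y =
      (WithLp.equiv 2 (Fin K → ℝ)).symm ((Matrix.diagonal w).mulVec
        (WithLp.equiv 2 (Fin K → ℝ) y)) := rfl
  rw [hy, EuclideanSpace.norm_eq, EuclideanSpace.norm_eq]
  apply Real.sqrt_le_sqrt
  apply Finset.sum_le_sum
  intro k _
  have h1 : ((WithLp.equiv 2 (Fin K → ℝ)).symm ((Matrix.diagonal w).mulVec
      (WithLp.equiv 2 (Fin K → ℝ) y))) k = w k * y k := by
    simp [Matrix.mulVec_diagonal]
  rw [h1]
  have h2 : w k ^ 2 ≤ 1 := by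
    rw [← sq_abs]; nlinarith [abs_nonneg (w k), hw k]
  simp only [Real.norm_eq_abs, sq_abs]
  rw [mul_pow]
  nlinarith [sq_nonneg (y k), sq_nonneg (w k)]

end Helpers

open scoped Matrix.Norms.L2Operator in
/-- orthogonal Procrustes factor bound.
If `U, U*` have orthonormal columns and `Uᵀ·U* = U_L·Λ_L·V_Lᵀ` is an SVD, then with
`R_U := U_L·V_Lᵀ` one has
`‖R_U − Uᵀ·U*‖ = ‖I − Λ_L‖ ≤ ‖I − Λ_L²‖ = ‖(I − U·Uᵀ)·U*‖²`. -/
theorem stmt19 (N K : ℕ)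
    (U Ustar : Matrix (Fin N) (Fin K) ℝ)
    (hU : Uᵀ * U = 1) (hUstar : Ustarᵀ * Ustar = 1)
    (UL VL : Matrix (Fin K) (Fin K) ℝ) (lam : Fin K → ℝ)
    (hUL : ULᵀ * UL = 1) (hUL' : UL * ULᵀ = 1)
    (hVL : VLᵀ * VL = 1) (hVL' : VL * VLᵀ = 1)
    (hlam : ∀ k, 0 ≤ lam k)
    (hSVD : Uᵀ * Ustar = UL * Matrix.diagonal lam * VLᵀ)
    (RU : Matrix (Fin K) (Fin K) ℝ) (hRU : RU = UL * VLᵀ) :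
    specNorm (RU - Uᵀ * Ustar) = specNorm (1 - Matrix.diagonal lam) ∧
    specNorm (1 - Matrix.diagonal lam) ≤ specNorm (1 - Matrix.diagonal lam ^ 2) ∧
    specNorm (1 - Matrix.diagonal lam ^ 2) = specNorm ((1 - U * Uᵀ) * Ustar) ^ 2 := by
  have hVLT : (VLᵀ)ᵀ * VLᵀ = 1 := by rw [Matrix.transpose_transpose]; exact hVL'
  have hVLT' : VLᵀ * (VLᵀ)ᵀ = 1 := by rw [Matrix.transpose_transpose]; exact hVL
  have hDT : (Matrix.diagonal lam)ᵀ = Matrix.diagonal lam := Matrix.diagonal_transpose lam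
  have hD2 : Matrix.diagonal lam ^ 2 = Matrix.diagonal (fun k => lam k * lam k) := by
    rw [pow_two, Matrix.diagonal_mul_diagonal]
  refine ⟨?_, ?_, ?_⟩
  · -- Part 1
    have e1 : RU - Uᵀ * Ustar = UL * (1 - Matrix.diagonal lam) * VLᵀ := by
      rw [hRU, hSVD, Matrix.mul_sub, Matrix.mul_one, Matrix.sub_mul]
    rw [e1, specNorm_eq_norm, specNorm_eq_norm]
    exact norm_conj UL _ VLᵀ hUL hUL' hVLT hVLT'
  · -- Part 2
    have hne : ∀ k, (1 : ℝ) + lam k ≠ 0 := fun k => by nlinarith [hlam k]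
    have e2 : (1 - Matrix.diagonal lam : Matrix (Fin K) (Fin K) ℝ) =
        (1 - Matrix.diagonal lam ^ 2) * Matrix.diagonal (fun k => (1 + lam k)⁻¹) := by
      rw [hD2, ← Matrix.diagonal_one, Matrix.diagonal_sub, Matrix.diagonal_sub,
        Matrix.diagonal_mul_diagonal]
      refine congrArg Matrix.diagonal (funext fun k => ?_)
      have hk := hne k
      field_simp
      ring
    rw [specNorm_eq_norm, specNorm_eq_norm, e2]
    have hw : ∀ k, |(1 + lam k)⁻¹| ≤ 1 := by
      intro k
      rw [abs_inv, abs_of_pos (by nlinarith [hlam k] : (0:ℝ) < 1 + lam k)]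
      rw [inv_le_one_iff₀]
      right; linarith [hlam k]
    calc ‖(1 - Matrix.diagonal lam ^ 2) * Matrix.diagonal (fun k => (1 + lam k)⁻¹)‖
        ≤ ‖1 - Matrix.diagonal lam ^ 2‖ * ‖Matrix.diagonal (fun k => (1 + lam k)⁻¹)‖ :=
          Matrix.l2_opNorm_mul _ _
      _ ≤ ‖1 - Matrix.diagonal lam ^ 2‖ :=
          mul_le_of_le_one_right (norm_nonneg _) (norm_diagonal_le_one _ hw)
  · -- Part 3
    set B := (1 - U * Uᵀ) * Ustar with hB
    have h1 : U * Uᵀ * U = U := by rw [Matrix.mul_assoc, hU, Matrix.mul_one]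
    have idem : (1 - U * Uᵀ) * (1 - U * Uᵀ) = 1 - U * Uᵀ := by
      have hAA : (U * Uᵀ) * (U * Uᵀ) = U * Uᵀ := by rw [← Matrix.mul_assoc, h1]
      rw [Matrix.sub_mul, Matrix.mul_sub, Matrix.mul_sub, hAA]
      simp only [Matrix.one_mul, Matrix.mul_one]
      abel
    have hsvd2 : (UL * Matrix.diagonal lam * VLᵀ)ᵀ * (UL * Matrix.diagonal lam * VLᵀ)
        = VL * Matrix.diagonal lam ^ 2 * VLᵀ := by
      rw [Matrix.transpose_mul, Matrix.transpose_mul, Matrix.transpose_transpose, hDT]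
      simp only [← Matrix.mul_assoc]
      rw [Matrix.mul_assoc (VL * Matrix.diagonal lam) ULᵀ UL, hUL, Matrix.mul_one,
        Matrix.mul_assoc VL, ← pow_two]
    have e3 : Bᵀ * B = VL * (1 - Matrix.diagonal lam ^ 2) * VLᵀ := by
      have hBT : Bᵀ = Ustarᵀ * (1 - U * Uᵀ) := by
        rw [hB, Matrix.transpose_mul, Matrix.transpose_sub, Matrix.transpose_one,
          Matrix.transpose_mul, Matrix.transpose_transpose]
      calc Bᵀ * B = Ustarᵀ * ((1 - U * Uᵀ) * ((1 - U * Uᵀ) * Ustar)) := by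
            rw [hBT, hB, Matrix.mul_assoc]
        _ = Ustarᵀ * ((1 - U * Uᵀ) * (1 - U * Uᵀ) * Ustar) := by rw [Matrix.mul_assoc]
        _ = Ustarᵀ * ((1 - U * Uᵀ) * Ustar) := by rw [idem]
        _ = Ustarᵀ * Ustar - Ustarᵀ * U * (Uᵀ * Ustar) := by
            rw [Matrix.sub_mul, Matrix.one_mul, Matrix.mul_sub]
            congr 1
            simp only [Matrix.mul_assoc]
        _ = 1 - (Uᵀ * Ustar)ᵀ * (Uᵀ * Ustar) := by
            rw [hUstar, Matrix.transpose_mul, Matrix.transpose_transpose]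
        _ = 1 - VL * Matrix.diagonal lam ^ 2 * VLᵀ := by rw [hSVD, hsvd2]
        _ = VL * (1 - Matrix.diagonal lam ^ 2) * VLᵀ := by
            rw [Matrix.mul_sub, Matrix.mul_one, Matrix.sub_mul, hVL']
    rw [specNorm_eq_norm, specNorm_eq_norm]
    calc ‖(1 : Matrix (Fin K) (Fin K) ℝ) - Matrix.diagonal lam ^ 2‖
        = ‖VL * (1 - Matrix.diagonal lam ^ 2) * VLᵀ‖ :=
          (norm_conj VL _ VLᵀ hVL hVL' hVLT hVLT').symm
      _ = ‖Bᵀ * B‖ := by rw [e3]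
      _ = ‖B‖ * ‖B‖ := by rw [← conjT_eq]; exact Matrix.l2_opNorm_conjTranspose_mul_self B
      _ = ‖B‖ ^ 2 := (sq ‖B‖).symm
end
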